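/- arXiv:2103.04938 — 6 statements merged into one kernel-verified Lean document; each statement's English description precedes it below -/
import Mathlib

section
/- Let D be an n×n real diagonal matrix and A an n×n symmetric entrywise-nonnegative matrix. Then D - A is positive definite if and only if there exists a strictly positive vector v ∈ ℝⁿ such that (D - A)v is strictly positive (every entry positive). -/
/-!
If `M v > 0` for some `v > 0`, substitute `x = v ⊙ y`: the quadratic form of `M` becomes
`∑ᵢ vᵢ (M v)ᵢ yᵢ² - ½ ∑_{i ≠ j} vᵢ Mᵢⱼ vⱼ (yᵢ - yⱼ)²`, which is positive because the
off-diagonal entries of `M` are `≤ 0`.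

Conversely, a positive definite matrix with nonpositive off-diagonal entries is inverse-positive:
if `M u ≥ 0`, the negative part `u⁻` satisfies `u⁻ᵀ M u⁻ = u⁻ᵀ M u⁺ - u⁻ᵀ M u ≤ 0`, so `u⁻ = 0`.
Hence `v = M⁻¹ 1 ≥ 0`, and `vᵢ = 0` would force `(M v)ᵢ ≤ 0`, so in fact `v > 0`.
-/


open Matrix

theorem two_mul_sum_sum_mul_mul_eq_sub {ι R : Type*} [Fintype ι] [CommRing R]
    (a : ι → ι → R) (ha : ∀ i j, a j i = a i j) (y : ι → R) :
    2 * ∑ i, ∑ j, a i j * y i * y j =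
      2 * ∑ i, (∑ j, a i j) * y i ^ 2 - ∑ i, ∑ j, a i j * (y i - y j) ^ 2 := by
  have hswap : ∑ i, ∑ j, a i j * y j ^ 2 = ∑ i, (∑ j, a i j) * y i ^ 2 := by
    rw [Finset.sum_comm]
    simp only [Finset.sum_mul, ha]
  have hexpand : ∑ i, ∑ j, a i j * (y i - y j) ^ 2 =
      ∑ i, (∑ j, a i j) * y i ^ 2 - 2 * ∑ i, ∑ j, a i j * y i * y j
        + ∑ i, ∑ j, a i j * y j ^ 2 := by
    simp only [Finset.sum_mul, Finset.mul_sum, ← Finset.sum_sub_distrib,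
      ← Finset.sum_add_distrib]
    refine Finset.sum_congr rfl fun i _ => Finset.sum_congr rfl fun j _ => by ring
  rw [hexpand, hswap]
  ring

namespace Matrix

def IsZMatrix {ι : Type*} (M : Matrix ι ι ℝ) : Prop := ∀ i j, i ≠ j → M i j ≤ 0

theorem IsDiag.sub_isZMatrix {ι : Type*} {D A : Matrix ι ι ℝ} (hD : D.IsDiag)
    (hA0 : ∀ i j, 0 ≤ A i j) :
    (D - A).IsZMatrix := fun i j hij => by
  simpa [hD hij] using hA0 i j

variable {ι : Type*} [Fintype ι] {M : Matrix ι ι ℝ}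

namespace IsZMatrix

theorem dotProduct_mulVec_nonpos (hM : M.IsZMatrix) {p q : ι → ℝ} (hp : 0 ≤ p) (hq : 0 ≤ q)
    (hpq : ∀ i, p i * q i = 0) : p ⬝ᵥ (M *ᵥ q) ≤ 0 := by
  simp only [dotProduct, mulVec, Finset.mul_sum]
  refine Finset.sum_nonpos fun i _ => Finset.sum_nonpos fun j _ => ?_
  rcases eq_or_ne i j with rfl | hij
  · linear_combination M i i * hpq i
  · have := mul_nonneg (hp i) (hq j)
    nlinarith [hM i j hij]

theorem posDef_of_pos_mulVec (hM : M.IsZMatrix) (hs : M.IsSymm) {v : ι → ℝ}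
    (hv : ∀ i, 0 < v i) (hMv : ∀ i, 0 < (M *ᵥ v) i) : M.PosDef := by
  refine posDef_iff_dotProduct_mulVec.mpr ⟨isHermitian_iff_isSymm.mpr hs, fun x hx => ?_⟩
  set y : ι → ℝ := fun i => x i / v i
  set a : ι → ι → ℝ := fun i j => v i * M i j * v j
  have hxy : ∀ i, x i = v i * y i := fun i => (mul_div_cancel₀ _ (hv i).ne').symm
  have hquad : star x ⬝ᵥ (M *ᵥ x) = ∑ i, ∑ j, a i j * y i * y j := by
    simp only [star_trivial, dotProduct, mulVec, Finset.mul_sum, hxy, a]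
    refine Finset.sum_congr rfl fun i _ => Finset.sum_congr rfl fun j _ => by ring
  have hrow : ∀ i, ∑ j, a i j = v i * (M *ᵥ v) i := by
    intro i
    simp only [a, mulVec, dotProduct, Finset.mul_sum, mul_assoc]
  have hsym : ∀ i j, a j i = a i j := fun i j => by
    simp only [a, hs.apply i j]; ring
  have hdiag : 0 < ∑ i, (∑ j, a i j) * y i ^ 2 := by
    obtain ⟨k, hk⟩ := Function.ne_iff.mp hx
    have hyk : y k ≠ 0 := div_ne_zero hk (hv k).ne'
    refine Finset.sum_pos' (fun i _ => ?_) ⟨k, Finset.mem_univ k, ?_⟩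
    · rw [hrow]; have := hv i; have := hMv i; positivity
    · rw [hrow]; have := hv k; have := hMv k; positivity
  have hoff : ∑ i, ∑ j, a i j * (y i - y j) ^ 2 ≤ 0 := by
    refine Finset.sum_nonpos fun i _ => Finset.sum_nonpos fun j _ => ?_
    rcases eq_or_ne i j with rfl | hij
    · simp
    · have : a i j ≤ 0 :=
        mul_nonpos_of_nonpos_of_nonneg
          (mul_nonpos_of_nonneg_of_nonpos (hv i).le (hM i j hij)) (hv j).le
      exact mul_nonpos_of_nonpos_of_nonneg this (sq_nonneg _)
  have := two_mul_sum_sum_mul_mul_eq_sub a hsym y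
  linarith

theorem nonneg_of_mulVec_nonneg (hM : M.IsZMatrix) (hpd : M.PosDef) {u : ι → ℝ}
    (hu : 0 ≤ M *ᵥ u) : 0 ≤ u := by
  suffices hneg : u⁻ = 0 by
    rw [← posPart_sub_negPart u, hneg, sub_zero]; exact posPart_nonneg u
  by_contra hne
  have hpos := hpd.dotProduct_mulVec_pos hne
  rw [star_trivial] at hpos
  have hsplit : u⁻ ⬝ᵥ (M *ᵥ u⁻) = u⁻ ⬝ᵥ (M *ᵥ u⁺) - u⁻ ⬝ᵥ (M *ᵥ u) := by
    rw [← dotProduct_sub, ← mulVec_sub,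
      ← eq_sub_of_add_eq (sub_eq_iff_eq_add'.mp (posPart_sub_negPart u)).symm]
  have hcross : u⁻ ⬝ᵥ (M *ᵥ u⁺) ≤ 0 :=
    hM.dotProduct_mulVec_nonpos (negPart_nonneg u) (posPart_nonneg u) fun i => by
      rcases le_total (u i) 0 with h | h <;> simp [h]
  have hmv : 0 ≤ u⁻ ⬝ᵥ (M *ᵥ u) := dotProduct_nonneg_of_nonneg (negPart_nonneg u) hu
  linarith

theorem exists_pos_mulVec_pos [DecidableEq ι] (hM : M.IsZMatrix) (hpd : M.PosDef) :
    ∃ v : ι → ℝ, (∀ i, 0 < v i) ∧ ∀ i, 0 < (M *ᵥ v) i := by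
  obtain ⟨v, hMv⟩ := mulVec_surjective_iff_isUnit.mpr hpd.isUnit 1
  have hv : 0 ≤ v := hM.nonneg_of_mulVec_nonneg hpd (by rw [hMv]; exact zero_le_one)
  refine ⟨v, fun i => ?_, fun i => by simp [hMv]⟩
  by_contra! hvi
  have hvi0 : v i = 0 := le_antisymm hvi (hv i)
  have : (M *ᵥ v) i ≤ 0 := by
    rw [← one_mul ((M *ᵥ v) i), ← single_dotProduct]
    refine hM.dotProduct_mulVec_nonpos (Pi.single_nonneg.mpr zero_le_one) hv fun j => ?_
    rcases eq_or_ne j i with rfl | hji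
    · simp [hvi0]
    · simp [hji]
  rw [hMv] at this
  exact absurd this (by simp)

theorem posDef_iff_exists_pos_mulVec_pos [DecidableEq ι] (hM : M.IsZMatrix) (hs : M.IsSymm) :
    M.PosDef ↔ ∃ v : ι → ℝ, (∀ i, 0 < v i) ∧ ∀ i, 0 < (M *ᵥ v) i :=
  ⟨hM.exists_pos_mulVec_pos, fun ⟨_, hv, hMv⟩ => hM.posDef_of_pos_mulVec hs hv hMv⟩

end IsZMatrix

end Matrix

theorem stmt0_general (n : ℕ)
    (D A : Matrix (Fin n) (Fin n) ℝ)
    (hD : D.IsDiag) (hA : A.IsSymm) (hA0 : ∀ i j, 0 ≤ A i j) :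
    (D - A).PosDef ↔
      ∃ v : Fin n → ℝ, (∀ i, 0 < v i) ∧ ∀ i, 0 < ((D - A) *ᵥ v) i :=
  (hD.sub_isZMatrix hA0).posDef_iff_exists_pos_mulVec_pos (hD.isSymm.sub hA)

theorem stmt0 (n : ℕ) (hn : 0 < n)
    (D A : Matrix (Fin n) (Fin n) ℝ)
    (hD : D.IsDiag) (hA : A.IsSymm) (hA0 : ∀ i j, 0 ≤ A i j) :
    (D - A).PosDef ↔
      ∃ v : Fin n → ℝ, (∀ i, 0 < v i) ∧ ∀ i, 0 < ((D - A) *ᵥ v) i :=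
  stmt0_general n D A hD hA hA0
end

section
/- Let D be an n×n real diagonal matrix and A an n×n symmetric entrywise-nonnegative matrix such that D - A is positive definite. Then (D - A)⁻¹ is symmetric and entrywise nonnegative. -/
/-!
Off the diagonal, `D - A` has nonpositive entries. For a positive definite matrix `M` with this sign
pattern, `0 ≤ M x` forces `0 ≤ x`: if `v = x⁻`, then `v ⬝ M x = v ⬝ M x⁺ - v ⬝ M v`, where the left side
is `≥ 0` and `v ⬝ M x⁺ ≤ 0` because `v` and `x⁺` have disjoint supports; hence `v ⬝ M v ≤ 0`, so
`v = 0`. Applied to `x = M⁻¹ eⱼ` this makes each column of `M⁻¹` nonnegative. Symmetry of `M⁻¹` is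
inherited from `M`.
-/

namespace Matrix

variable {ι R : Type*} [Fintype ι]

lemma dotProduct_mulVec_nonpos_of_disjoint [Semiring R] [PartialOrder R] [IsOrderedRing R]
    {M : Matrix ι ι R} (hM : ∀ i j, i ≠ j → M i j ≤ 0) {u v : ι → R} (hu : 0 ≤ u) (hv : 0 ≤ v)
    (huv : ∀ k, u k = 0 ∨ v k = 0) :
    v ⬝ᵥ (M *ᵥ u) ≤ 0 := by
  simp only [dotProduct, mulVec, Finset.mul_sum]
  refine Finset.sum_nonpos fun i _ => Finset.sum_nonpos fun j _ => ?_
  obtain rfl | hij := eq_or_ne i j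
  · rcases huv i with h | h <;> simp [h]
  · exact mul_nonpos_of_nonneg_of_nonpos (hv i) (mul_nonpos_of_nonpos_of_nonneg (hM i j hij) (hu j))

variable [Field R] [LinearOrder R] [IsStrictOrderedRing R] [StarRing R] [TrivialStar R]

lemma PosDef.nonneg_of_mulVec_nonneg {M : Matrix ι ι R} (hPD : M.PosDef)
    (hM : ∀ i j, i ≠ j → M i j ≤ 0) {x : ι → R} (hMx : 0 ≤ M *ᵥ x) : 0 ≤ x := by
  have hdisj : ∀ k, x⁺ k = 0 ∨ x⁻ k = 0 := fun k => by
    rcases le_total (x k) 0 with h | h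
    · exact .inl (posPart_eq_zero.2 h)
    · exact .inr (negPart_eq_zero.2 h)
  have hcross : x⁻ ⬝ᵥ (M *ᵥ x⁺) ≤ 0 :=
    dotProduct_mulVec_nonpos_of_disjoint hM (posPart_nonneg x) (negPart_nonneg x) hdisj
  have hrhs : 0 ≤ x⁻ ⬝ᵥ (M *ᵥ x) := dotProduct_nonneg_of_nonneg (negPart_nonneg x) hMx
  have hsplit : x⁻ ⬝ᵥ (M *ᵥ x) = x⁻ ⬝ᵥ (M *ᵥ x⁺) - x⁻ ⬝ᵥ (M *ᵥ x⁻) := by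
    rw [← dotProduct_sub, ← mulVec_sub, posPart_sub_negPart]
  have hneg : x⁻ = 0 := by
    by_contra hne
    have := hPD.dotProduct_mulVec_pos hne
    rw [star_trivial] at this
    linarith
  exact negPart_eq_zero.1 hneg

lemma PosDef.inv_apply_nonneg [DecidableEq ι] {M : Matrix ι ι R} (hPD : M.PosDef)
    (hM : ∀ i j, i ≠ j → M i j ≤ 0) (i j : ι) : 0 ≤ M⁻¹ i j := by
  have hcol : M *ᵥ (M⁻¹ *ᵥ Pi.single j 1) = Pi.single j 1 := by
    rw [mulVec_mulVec, mul_nonsing_inv M (M.isUnit_iff_isUnit_det.1 hPD.isUnit), one_mulVec]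
  have := hPD.nonneg_of_mulVec_nonneg hM (hcol ▸ Pi.single_nonneg.2 zero_le_one) i
  simpa [mulVec_single] using this

end Matrix

theorem stmt1_general (n : ℕ)
    (D A : Matrix (Fin n) (Fin n) ℝ)
    (hD : D.IsDiag) (hA0 : ∀ i j, 0 ≤ A i j)
    (hPD : (D - A).PosDef) :
    (D - A)⁻¹.IsSymm ∧ ∀ i j, 0 ≤ (D - A)⁻¹ i j := by
  have hZ : ∀ i j, i ≠ j → (D - A) i j ≤ 0 := fun i j hij => by
    simpa [hD hij] using hA0 i j
  exact ⟨hPD.1.inv, hPD.inv_apply_nonneg hZ⟩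

theorem stmt1 (n : ℕ) (hn : 0 < n)
    (D A : Matrix (Fin n) (Fin n) ℝ)
    (hD : D.IsDiag) (hA : A.IsSymm) (hA0 : ∀ i j, 0 ≤ A i j)
    (hPD : (D - A).PosDef) :
    (D - A)⁻¹.IsSymm ∧ ∀ i j, 0 ≤ (D - A)⁻¹ i j :=
  stmt1_general n D A hD hA0 hPD
end

section
/- Let D be an n×n real diagonal matrix and A an n×n symmetric entrywise-nonnegative matrix. If there exists a strictly positive vector v with (D - A)v strictly positive, then for any vector b with all entries ≤ 0, the vector (D - A)⁻¹ b has all entries ≤ 0. -/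
open Matrix

lemma key_lemma (n : ℕ) (hn : 0 < n) (M : Matrix (Fin n) (Fin n) ℝ)
    (hoff : ∀ i j, i ≠ j → M i j ≤ 0)
    (v : Fin n → ℝ) (hv : ∀ i, 0 < v i) (hMv : ∀ i, 0 < (M *ᵥ v) i)
    (x : Fin n → ℝ) (hx : ∀ i, (M *ᵥ x) i ≤ 0) : ∀ i, x i ≤ 0 := by
  have hne : Nonempty (Fin n) := ⟨⟨0, hn⟩⟩
  obtain ⟨i₀, hi₀⟩ := Finite.exists_max (fun i => x i / v i)
  set t := x i₀ / v i₀ with ht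
  have hle : ∀ j, x j ≤ t * v j := fun j => by
    have := hi₀ j
    simpa using (div_le_iff₀ (hv j)).mp this
  by_cases htpos : t ≤ 0
  · intro i
    have h1 := hle i
    nlinarith [hv i]
  · push_neg at htpos
    exfalso
    have hx0 : x i₀ = t * v i₀ := by
      rw [ht, div_mul_cancel₀ _ (ne_of_gt (hv i₀))]
    have hsum : t * (M *ᵥ v) i₀ ≤ (M *ᵥ x) i₀ := by
      simp only [mulVec, dotProduct]
      rw [Finset.mul_sum]
      apply Finset.sum_le_sum
      intro j _
      rcases eq_or_ne j i₀ with rfl | hji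
      · rw [hx0]; ring_nf; exact le_refl _
      · have h1 : M i₀ j ≤ 0 := hoff i₀ j (Ne.symm hji)
        nlinarith [hle j]
    nlinarith [hMv i₀, hx i₀]

theorem stmt2 (n : ℕ) (hn : 0 < n)
    (D A : Matrix (Fin n) (Fin n) ℝ)
    (hD : D.IsDiag) (hA : A.IsSymm) (hA0 : ∀ i j, 0 ≤ A i j)
    (v : Fin n → ℝ) (hv : ∀ i, 0 < v i) (hDAv : ∀ i, 0 < ((D - A) *ᵥ v) i)
    (b : Fin n → ℝ) (hb : ∀ i, b i ≤ 0) :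
    ∀ i, ((D - A)⁻¹ *ᵥ b) i ≤ 0 := by
  set M := D - A with hM
  have hoff : ∀ i j, i ≠ j → M i j ≤ 0 := by
    intro i j hij
    have hDij : D i j = 0 := hD hij
    simp [hM, hDij, hA0 i j]
  have hdet : IsUnit M.det := by
    rw [isUnit_iff_ne_zero]
    intro h0
    obtain ⟨u, hu0, hMu⟩ := (Matrix.exists_mulVec_eq_zero_iff.mpr h0)
    have h1 : ∀ i, u i ≤ 0 := key_lemma n hn M hoff v hv hDAv u (fun i => by
      rw [hMu]; simp)
    have h2 : ∀ i, -u i ≤ 0 := key_lemma n hn M hoff v hv hDAv (-u) (fun i => by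
      rw [Matrix.mulVec_neg, hMu]; simp)
    apply hu0
    funext i
    have := h1 i; have := h2 i
    simp only [Pi.zero_apply]
    linarith
  have hMx : M *ᵥ (M⁻¹ *ᵥ b) = b := by
    rw [Matrix.mulVec_mulVec, Matrix.mul_nonsing_inv M hdet, Matrix.one_mulVec]
  exact key_lemma n hn M hoff v hv hDAv (M⁻¹ *ᵥ b) (fun i => by rw [hMx]; exact hb i)
end

section
/- Let A be an n×n irreducible Metzler matrix (off-diagonal entries nonnegative) that admits a strictly positive vector w with Aw = 0. Then 0 is an eigenvalue of A and every other eigenvalue λ of A satisfies Re(λ) < 0. -/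
/-!
Conjugating `A` by `diagonal w` gives a Metzler matrix with zero row sums, so by Gershgorin every
eigenvalue lies in a disc with centre `A k k ≤ 0` and radius `-A k k`. Such a disc lies in the
closed left half-plane and meets the imaginary axis only at `0`.
-/

open Matrix

section
variable {ι : Type*} [Fintype ι] [DecidableEq ι]

lemma Matrix.hasEigenvalue_diagonal_inv_mul_mul_diagonal {K : Type*} [Field K]
    {A : Matrix ι ι K} {d : ι → K} (hd : ∀ i, d i ≠ 0) {μ : K} {x : ι → K} (hx : x ≠ 0)
    (hAx : A *ᵥ x = μ • x) :
    Module.End.HasEigenvalue (toLin' (diagonal d⁻¹ * A * diagonal d)) μ := by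
  have hdd : diagonal d * diagonal d⁻¹ = 1 := by
    rw [diagonal_mul_diagonal, ← diagonal_one]
    exact congrArg diagonal (funext fun i => mul_inv_cancel₀ (hd i))
  refine Module.End.hasEigenvalue_of_hasEigenvector (x := diagonal d⁻¹ *ᵥ x) ⟨?_, ?_⟩
  · rw [Module.End.mem_eigenspace_iff, toLin'_apply, mulVec_mulVec, Matrix.mul_assoc,
      Matrix.mul_assoc, hdd, Matrix.mul_one, ← mulVec_mulVec, hAx, mulVec_smul]
  · intro h
    apply hx
    rw [← one_mulVec x, ← hdd, ← mulVec_mulVec, h, mulVec_zero]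

lemma Matrix.exists_norm_sub_diag_le_neg_diag_of_mulVec_eq_zero {A : Matrix ι ι ℝ}
    (hA : ∀ i j, i ≠ j → 0 ≤ A i j) {w : ι → ℝ} (hw : ∀ i, 0 < w i) (hAw : A *ᵥ w = 0)
    {μ : ℂ} {x : ι → ℂ} (hx : x ≠ 0) (hAx : A.map Complex.ofReal *ᵥ x = μ • x) :
    ∃ k, ‖μ - A k k‖ ≤ -A k k := by
  have hw' : ∀ i, (w i : ℂ) ≠ 0 := fun i => Complex.ofReal_ne_zero.mpr (hw i).ne'
  obtain ⟨k, hk⟩ := eigenvalue_mem_ball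
    (hasEigenvalue_diagonal_inv_mul_mul_diagonal (d := fun i => (w i : ℂ)) hw' hx hAx)
  have hentry : ∀ j, (diagonal (fun i => (w i : ℂ))⁻¹ * A.map Complex.ofReal *
      diagonal fun i => (w i : ℂ)) k j = ((w k)⁻¹ * A k j * w j : ℝ) := fun j => by
    simp [diagonal_mul, mul_diagonal]
  have hdiag : (w k)⁻¹ * A k k * w k = A k k := by field_simp [(hw k).ne']
  have hrow : ∑ j ∈ Finset.univ.erase k, A k j * w j = -(A k k * w k) := by
    have := congrFun hAw k
    rw [mulVec, dotProduct, ← Finset.add_sum_erase _ _ (Finset.mem_univ k)] at this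
    simp only [Pi.zero_apply] at this
    linarith
  refine ⟨k, ?_⟩
  calc ‖μ - A k k‖ ≤ ∑ j ∈ Finset.univ.erase k, (w k)⁻¹ * A k j * w j := by
        rw [mem_closedBall_iff_norm, hentry, hdiag] at hk
        refine hk.trans_eq (Finset.sum_congr rfl fun j hj => ?_)
        have := hA k j (Finset.ne_of_mem_erase hj).symm
        have := hw j
        have := hw k
        rw [hentry, Complex.norm_real, Real.norm_of_nonneg (by positivity)]
    _ = -A k k := by
        simp_rw [mul_assoc, ← Finset.mul_sum, hrow]
        field_simp [(hw k).ne']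

end

lemma Complex.re_neg_of_norm_sub_ofReal_le_neg {μ : ℂ} {a : ℝ} (h : ‖μ - a‖ ≤ -a)
    (hμ : μ ≠ 0) : μ.re < 0 := by
  have hsq : (μ.re - a) ^ 2 + μ.im ^ 2 ≤ a ^ 2 := by
    have := Complex.sq_norm (μ - a)
    rw [Complex.normSq_apply] at this
    simp only [sub_re, ofReal_re, sub_im, ofReal_im, sub_zero] at this
    nlinarith [norm_nonneg (μ - a)]
  have hpos : 0 < μ.re ^ 2 + μ.im ^ 2 := by
    simpa [Complex.normSq_apply, sq] using Complex.normSq_pos.mpr hμ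
  nlinarith [(norm_nonneg _).trans h]

theorem stmt5_general (n : ℕ) (hn : 0 < n)
    (A : Matrix (Fin n) (Fin n) ℝ)
    (hMetzler : ∀ i j, i ≠ j → 0 ≤ A i j)
    (w : Fin n → ℝ) (hw : ∀ i, 0 < w i) (hAw : A *ᵥ w = 0) :
    (∃ x : Fin n → ℂ, x ≠ 0 ∧ (A.map (Complex.ofReal ·)) *ᵥ x = (0 : ℂ) • x) ∧
    ∀ (μ : ℂ) (x : Fin n → ℂ), x ≠ 0 →
      (A.map (Complex.ofReal ·)) *ᵥ x = μ • x → μ ≠ 0 → μ.re < 0 := by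
  refine ⟨⟨Complex.ofReal ∘ w, ?_, ?_⟩, fun μ x hx hAx hμ => ?_⟩
  · exact fun h => (hw ⟨0, hn⟩).ne' (Complex.ofReal_eq_zero.mp (congrFun h ⟨0, hn⟩))
  · ext i
    rw [zero_smul]
    exact (RingHom.map_mulVec Complex.ofRealHom A w i).symm.trans (by simp [hAw])
  · obtain ⟨k, hk⟩ :=
      exists_norm_sub_diag_le_neg_diag_of_mulVec_eq_zero hMetzler hw hAw hx hAx
    exact Complex.re_neg_of_norm_sub_ofReal_le_neg hk hμ

theorem stmt5 (n : ℕ) (hn : 0 < n)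
    (A : Matrix (Fin n) (Fin n) ℝ)
    (hMetzler : ∀ i j, i ≠ j → 0 ≤ A i j)
    (hirr : ∀ S : Set (Fin n), S.Nonempty → S ≠ Set.univ →
      ∃ i ∈ S, ∃ j, j ∉ S ∧ A i j ≠ 0)
    (w : Fin n → ℝ) (hw : ∀ i, 0 < w i) (hAw : A *ᵥ w = 0) :
    (∃ x : Fin n → ℂ, x ≠ 0 ∧ (A.map (Complex.ofReal ·)) *ᵥ x = (0 : ℂ) • x) ∧
    ∀ (μ : ℂ) (x : Fin n → ℂ), x ≠ 0 →
      (A.map (Complex.ofReal ·)) *ᵥ x = μ • x → μ ≠ 0 → μ.re < 0 :=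
  stmt5_general n hn A hMetzler w hw hAw
end

section
/- In the setting of the previous statement, if additionally every row of A_{1,3} contains a negative entry (i.e., A_{1,3}𝟙 ≪ 0 entrywise), then (D₁ - A_{1,1})v₁ = A_{1,3}v₃ is strictly positive, and consequently D₁ - A_{1,1} is positive definite. -/
/-! Substituting `x = y ∘ v` turns the quadratic form of a symmetric `M` into
`∑ᵢ (M v)ᵢ vᵢ yᵢ² - ½ ∑ᵢⱼ Mᵢⱼ vᵢ vⱼ (yᵢ - yⱼ)²`. When `v ≫ 0`, `M v ≫ 0` and `M` has
nonpositive off-diagonal entries, the first sum is positive for `y ≠ 0` and the second is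
nonpositive, so `M` is positive definite. For `M = D₁ - A₁₁` we have `M v₁ = A₁₃ v₃`, which is
strictly positive because every row of `A₁₃` is nonpositive with a negative entry and `v₃ ≪ 0`. -/

open Matrix Finset

namespace Matrix

variable {ι κ : Type*}

theorem two_mul_dotProduct_mulVec_mul_eq [Fintype ι] {M : Matrix ι ι ℝ} (hM : M.IsSymm)
    (v y : ι → ℝ) :
    2 * ((y * v) ⬝ᵥ M *ᵥ (y * v)) =
      2 * ∑ i, (M *ᵥ v) i * v i * y i ^ 2 - ∑ i, ∑ j, M i j * v i * v j * (y i - y j) ^ 2 := by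
  have hform : (y * v) ⬝ᵥ M *ᵥ (y * v) = ∑ i, ∑ j, M i j * v i * v j * (y i * y j) := by
    simp only [dotProduct, mulVec, Pi.mul_apply, mul_sum]
    exact sum_congr rfl fun i _ => sum_congr rfl fun j _ => by ring
  have hrow : ∑ i, (M *ᵥ v) i * v i * y i ^ 2 = ∑ i, ∑ j, M i j * v i * v j * y i ^ 2 := by
    simp only [mulVec, dotProduct, sum_mul]
    exact sum_congr rfl fun i _ => sum_congr rfl fun j _ => by ring
  have hswap : ∑ i, ∑ j, M i j * v i * v j * y j ^ 2 = ∑ i, ∑ j, M i j * v i * v j * y i ^ 2 := by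
    rw [Finset.sum_comm]
    exact sum_congr rfl fun i _ => sum_congr rfl fun j _ => by rw [hM.apply i j]; ring
  have hexpand : ∑ i, ∑ j, M i j * v i * v j * (y i - y j) ^ 2 =
      ∑ i, ∑ j, M i j * v i * v j * y i ^ 2 + ∑ i, ∑ j, M i j * v i * v j * y j ^ 2 -
        2 * ∑ i, ∑ j, M i j * v i * v j * (y i * y j) := by
    simp only [mul_sum, ← sum_add_distrib, ← sum_sub_distrib]
    exact sum_congr rfl fun i _ => sum_congr rfl fun j _ => by ring
  rw [hform, hrow, hexpand, hswap]
  ring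

theorem posDef_of_offDiag_nonpos_of_mulVec_pos [Fintype ι] {M : Matrix ι ι ℝ} (hM : M.IsSymm)
    (hoff : ∀ i j, i ≠ j → M i j ≤ 0) {v : ι → ℝ} (hv : ∀ i, 0 < v i)
    (hMv : ∀ i, 0 < (M *ᵥ v) i) : M.PosDef := by
  refine posDef_iff_dotProduct_mulVec.mpr ⟨hM, fun x hx => ?_⟩
  set y : ι → ℝ := fun i => x i / v i
  have hxy : x = y * v := funext fun i => (div_mul_cancel₀ _ (hv i).ne').symm
  obtain ⟨k, hk⟩ := Function.ne_iff.mp hx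
  have hyk : y k ≠ 0 := div_ne_zero hk (hv k).ne'
  have hdiag : 0 < ∑ i, (M *ᵥ v) i * v i * y i ^ 2 :=
    sum_pos' (fun i _ => by have := hMv i; have := hv i; positivity)
      ⟨k, mem_univ k, by have := hMv k; have := hv k; positivity⟩
  have hoffDiag : ∑ i, ∑ j, M i j * v i * v j * (y i - y j) ^ 2 ≤ 0 := by
    refine sum_nonpos fun i _ => sum_nonpos fun j _ => ?_
    rcases eq_or_ne i j with rfl | hij
    · simp
    · exact mul_nonpos_of_nonpos_of_nonneg
        (mul_nonpos_of_nonpos_of_nonneg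
          (mul_nonpos_of_nonpos_of_nonneg (hoff i j hij) (hv i).le) (hv j).le) (sq_nonneg _)
  have := two_mul_dotProduct_mulVec_mul_eq hM v y
  rw [star_trivial, hxy]
  linarith

theorem mulVec_pos_of_nonpos_of_neg [Fintype κ] {A : Matrix ι κ ℝ} (hA : ∀ i j, A i j ≤ 0)
    (hrows : ∀ i, (A *ᵥ 1) i < 0) {w : κ → ℝ} (hw : ∀ j, w j < 0) (i : ι) :
    0 < (A *ᵥ w) i := by
  obtain ⟨j, hj⟩ : ∃ j, A i j < 0 := by
    by_contra! h
    refine (hrows i).not_ge ?_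
    simpa [mulVec, dotProduct] using sum_nonneg fun j (_ : j ∈ univ) => h j
  exact sum_pos' (fun k _ => mul_nonneg_of_nonpos_of_nonpos (hA i k) (hw k).le)
    ⟨j, mem_univ j, mul_pos_of_neg_of_neg hj (hw j)⟩

end Matrix

theorem stmt12_general (n₁ n₃ : ℕ)
    (A₁₁ : Matrix (Fin n₁) (Fin n₁) ℝ) (A₁₃ : Matrix (Fin n₁) (Fin n₃) ℝ)
    (hA₁₁symm : A₁₁.IsSymm) (hA₁₁0 : ∀ i j, 0 ≤ A₁₁ i j)
    (hA₁₃0 : ∀ i j, A₁₃ i j ≤ 0)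
    (hA₁₃rows : ∀ i, (A₁₃ *ᵥ 1) i < 0)
    (v₁ : Fin n₁ → ℝ) (v₃ : Fin n₃ → ℝ)
    (hv₁ : ∀ i, 0 < v₁ i) (hv₃ : ∀ i, v₃ i < 0)
    (D₁ : Matrix (Fin n₁) (Fin n₁) ℝ) (hD₁ : D₁.IsDiag)
    (hD₁v : D₁ *ᵥ v₁ = A₁₁ *ᵥ v₁ + A₁₃ *ᵥ v₃) :
    (D₁ - A₁₁) *ᵥ v₁ = A₁₃ *ᵥ v₃ ∧ (∀ i, 0 < ((D₁ - A₁₁) *ᵥ v₁) i) ∧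
      (D₁ - A₁₁).PosDef := by
  have hMv : (D₁ - A₁₁) *ᵥ v₁ = A₁₃ *ᵥ v₃ := by
    rw [sub_mulVec, hD₁v, add_sub_cancel_left]
  have hpos : ∀ i, 0 < ((D₁ - A₁₁) *ᵥ v₁) i :=
    hMv ▸ mulVec_pos_of_nonpos_of_neg hA₁₃0 hA₁₃rows hv₃
  have hoff : ∀ i j, i ≠ j → (D₁ - A₁₁) i j ≤ 0 := fun i j hij => by
    simpa [hD₁ hij] using hA₁₁0 i j
  exact ⟨hMv, hpos,
    posDef_of_offDiag_nonpos_of_mulVec_pos (hD₁.isSymm.sub hA₁₁symm) hoff hv₁ hpos⟩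

theorem stmt12 (n₁ n₃ : ℕ)
    (A₁₁ : Matrix (Fin n₁) (Fin n₁) ℝ) (A₁₃ : Matrix (Fin n₁) (Fin n₃) ℝ)
    (hA₁₁symm : A₁₁.IsSymm) (hA₁₁0 : ∀ i j, 0 ≤ A₁₁ i j)
    (hA₁₁diag : ∀ i, A₁₁ i i = 0)
    (hA₁₃0 : ∀ i j, A₁₃ i j ≤ 0)
    (hA₁₃rows : ∀ i, (A₁₃ *ᵥ 1) i < 0)
    (v₁ : Fin n₁ → ℝ) (v₃ : Fin n₃ → ℝ)
    (hv₁ : ∀ i, 0 < v₁ i) (hv₃ : ∀ i, v₃ i < 0)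
    (D₁ : Matrix (Fin n₁) (Fin n₁) ℝ) (hD₁ : D₁.IsDiag)
    (hD₁v : D₁ *ᵥ v₁ = A₁₁ *ᵥ v₁ + A₁₃ *ᵥ v₃) :
    (D₁ - A₁₁) *ᵥ v₁ = A₁₃ *ᵥ v₃ ∧ (∀ i, 0 < ((D₁ - A₁₁) *ᵥ v₁) i) ∧
      (D₁ - A₁₁).PosDef :=
  stmt12_general n₁ n₃ A₁₁ A₁₃ hA₁₁symm hA₁₁0 hA₁₃0 hA₁₃rows v₁ v₃ hv₁ hv₃ D₁ hD₁ hD₁v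
end

section
/- Let M be a real symmetric positive semidefinite matrix with one-dimensional kernel spanned by v = [v₁; 0; v₃] where v₁ ∈ ℝ^{n₁} is strictly positive and v₃ ∈ ℝ^{n₃} is strictly negative. Then for every initial state x(0) with vᵀx(0) > 0, the limit x(∞) = lim exp(-tM)x(0) has all first-block components positive, all second-block components zero, and all third-block components negative (sign consensus). -/
/-!
Diagonalise `M = U diag(λ) Uᵀ` with `λ ≥ 0`. In eigencoordinates `exp (-t M)` multiplies the
`i`-th coordinate by `exp (-t λᵢ)`, so it fixes `ker M` and sends every vector orthogonal to
`ker M` to `0` as `t → ∞`. Splitting `x₀ = a v + r` with `r ⊥ v` gives the limit `a v`, where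
`a = (v ⬝ x₀) / (v ⬝ v) > 0`; its sign pattern is that of `v`.
-/

open Matrix Filter Topology

namespace Matrix.IsHermitian

variable {ι : Type*} [Fintype ι] [DecidableEq ι] {M : Matrix ι ι ℝ}

theorem eq_eigenvectorUnitary_mul_diagonal_mul_star (hM : M.IsHermitian) :
    M = (hM.eigenvectorUnitary : Matrix ι ι ℝ) * diagonal hM.eigenvalues *
      star (hM.eigenvectorUnitary : Matrix ι ι ℝ) := by
  simpa [Function.comp_def] using hM.spectral_theorem

theorem exp_neg_smul_eq (hM : M.IsHermitian) (t : ℝ) :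
    NormedSpace.exp (-(t • M)) = (hM.eigenvectorUnitary : Matrix ι ι ℝ) *
      diagonal (fun i => Real.exp (-(t * hM.eigenvalues i))) *
      star (hM.eigenvectorUnitary : Matrix ι ι ℝ) := by
  have h := Matrix.exp_units_conj (Unitary.toUnits hM.eigenvectorUnitary)
    (diagonal fun i => -(t * hM.eigenvalues i))
  simp only [Unitary.val_toUnits_apply, Unitary.val_inv_toUnits_apply, exp_diagonal,
    ← Unitary.star_eq_inv, Unitary.coe_star] at h
  convert h using 2
  · conv_lhs => rw [hM.eq_eigenvectorUnitary_mul_diagonal_mul_star]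
    rw [show (diagonal fun i => -(t * hM.eigenvalues i)) = -(t • diagonal hM.eigenvalues) by
      ext i j; by_cases h : i = j <;> simp [h]]
    simp only [Matrix.mul_neg, Matrix.neg_mul, Matrix.mul_smul, Matrix.smul_mul]
  · ext i
    simp [Pi.exp_def, Real.exp_eq_exp_ℝ]

theorem exp_neg_smul_mulVec (hM : M.IsHermitian) (t : ℝ) (x : ι → ℝ) :
    NormedSpace.exp (-(t • M)) *ᵥ x = (hM.eigenvectorUnitary : Matrix ι ι ℝ) *ᵥ
      fun i => Real.exp (-(t * hM.eigenvalues i)) *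
        (star (hM.eigenvectorUnitary : Matrix ι ι ℝ) *ᵥ x) i := by
  rw [hM.exp_neg_smul_eq, ← mulVec_mulVec, ← mulVec_mulVec]
  congr 1
  ext i
  exact mulVec_diagonal _ _ _

theorem star_eigenvectorUnitary_mulVec_mulVec (hM : M.IsHermitian) (x : ι → ℝ) :
    star (hM.eigenvectorUnitary : Matrix ι ι ℝ) *ᵥ (M *ᵥ x) =
      diagonal hM.eigenvalues *ᵥ (star (hM.eigenvectorUnitary : Matrix ι ι ℝ) *ᵥ x) := by
  rw [mulVec_mulVec, congrArg (star (hM.eigenvectorUnitary : Matrix ι ι ℝ) * ·)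
    hM.eq_eigenvectorUnitary_mul_diagonal_mul_star]
  simp only [mulVec_mulVec, ← Matrix.mul_assoc, Unitary.coe_star_mul_self, Matrix.one_mul]

theorem star_eigenvectorUnitary_mulVec_apply (hM : M.IsHermitian) (x : ι → ℝ) (i : ι) :
    (star (hM.eigenvectorUnitary : Matrix ι ι ℝ) *ᵥ x) i = ⇑(hM.eigenvectorBasis i) ⬝ᵥ x := by
  simp [mulVec, dotProduct, star_apply]

theorem exp_neg_smul_mulVec_of_mulVec_eq_zero (hM : M.IsHermitian) {v : ι → ℝ}
    (hv : M *ᵥ v = 0) (t : ℝ) : NormedSpace.exp (-(t • M)) *ᵥ v = v := by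
  set y := star (hM.eigenvectorUnitary : Matrix ι ι ℝ) *ᵥ v
  have hy : ∀ i, hM.eigenvalues i * y i = 0 := fun i => by
    simpa [mulVec_diagonal, hv] using congrFun (hM.star_eigenvectorUnitary_mulVec_mulVec v).symm i
  have hexp_y : (fun i => Real.exp (-(t * hM.eigenvalues i)) * y i) = y := funext fun i => by
    rcases mul_eq_zero.1 (hy i) with h | h <;> simp [h]
  rw [hM.exp_neg_smul_mulVec, hexp_y, mulVec_mulVec,
    Unitary.mul_star_self_of_mem hM.eigenvectorUnitary.2, one_mulVec]

end Matrix.IsHermitian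

namespace Matrix.PosSemidef

variable {ι : Type*} [Fintype ι] [DecidableEq ι] {M : Matrix ι ι ℝ}

theorem tendsto_exp_neg_smul_mulVec_zero (hM : M.PosSemidef) {x : ι → ℝ}
    (hx : ∀ y, M *ᵥ y = 0 → y ⬝ᵥ x = 0) :
    Tendsto (fun t : ℝ => NormedSpace.exp (-(t • M)) *ᵥ x) atTop (𝓝 0) := by
  have hcoord : ∀ i, Tendsto (fun t : ℝ => Real.exp (-(t * hM.1.eigenvalues i)) *
      (star (hM.1.eigenvectorUnitary : Matrix ι ι ℝ) *ᵥ x) i) atTop (𝓝 0) := by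
    intro i
    rcases (hM.eigenvalues_nonneg i).eq_or_lt with h0 | hpos
    · have hker : M *ᵥ ⇑(hM.1.eigenvectorBasis i) = 0 := by
        rw [hM.1.mulVec_eigenvectorBasis, ← h0, zero_smul]
      simp [hM.1.star_eigenvectorUnitary_mulVec_apply, hx _ hker]
    · simpa using (Real.tendsto_exp_atBot.comp (tendsto_neg_atTop_atBot.comp
        (tendsto_id.atTop_mul_const hpos))).mul_const _
  have hU := ((continuous_const (y := (hM.1.eigenvectorUnitary : Matrix ι ι ℝ))).matrix_mulVec
    continuous_id).tendsto 0
  simpa [hM.1.exp_neg_smul_mulVec, Function.comp_def] using hU.comp (tendsto_pi_nhds.2 hcoord)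

theorem tendsto_exp_neg_smul_mulVec_of_ker_eq_span (hM : M.PosSemidef) {v : ι → ℝ}
    (hker : ∀ x, M *ᵥ x = 0 ↔ ∃ c : ℝ, x = c • v) (hv : v ≠ 0) (x : ι → ℝ) :
    Tendsto (fun t : ℝ => NormedSpace.exp (-(t • M)) *ᵥ x) atTop
      (𝓝 (((v ⬝ᵥ x) / (v ⬝ᵥ v)) • v)) := by
  set a := (v ⬝ᵥ x) / (v ⬝ᵥ v)
  have hvv : v ⬝ᵥ v ≠ 0 := fun h => hv (dotProduct_self_eq_zero.1 h)
  have hperp : ∀ y, M *ᵥ y = 0 → y ⬝ᵥ (x - a • v) = 0 := by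
    intro y hy
    obtain ⟨c, rfl⟩ := (hker y).1 hy
    simp only [smul_dotProduct, dotProduct_sub, dotProduct_smul, smul_eq_mul, a]
    field_simp
    ring
  have hMv : M *ᵥ v = 0 := (hker v).2 ⟨1, (one_smul ℝ v).symm⟩
  have hsplit : ∀ t : ℝ, NormedSpace.exp (-(t • M)) *ᵥ x =
      a • v + NormedSpace.exp (-(t • M)) *ᵥ (x - a • v) := fun t => by
    rw [mulVec_sub, mulVec_smul, hM.1.exp_neg_smul_mulVec_of_mulVec_eq_zero hMv]
    abel
  simpa [hsplit] using (hM.tendsto_exp_neg_smul_mulVec_zero hperp).const_add (a • v)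

end Matrix.PosSemidef

theorem stmt15_general (n₁ n₂ n₃ : ℕ)
    (M : Matrix (Fin n₁ ⊕ Fin n₂ ⊕ Fin n₃) (Fin n₁ ⊕ Fin n₂ ⊕ Fin n₃) ℝ)
    (hPSD : M.PosSemidef)
    (v₁ : Fin n₁ → ℝ) (v₃ : Fin n₃ → ℝ)
    (hv₁ : ∀ i, 0 < v₁ i) (hv₃ : ∀ i, v₃ i < 0)
    (v : Fin n₁ ⊕ Fin n₂ ⊕ Fin n₃ → ℝ)
    (hv : v = Sum.elim v₁ (Sum.elim (0 : Fin n₂ → ℝ) v₃))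
    (hker : ∀ x, M *ᵥ x = 0 ↔ ∃ c : ℝ, x = c • v)
    (x0 : Fin n₁ ⊕ Fin n₂ ⊕ Fin n₃ → ℝ) (hx0 : 0 < v ⬝ᵥ x0) :
    ∃ L : Fin n₁ ⊕ Fin n₂ ⊕ Fin n₃ → ℝ,
      Tendsto (fun t : ℝ => (NormedSpace.exp (-(t • M))) *ᵥ x0) atTop (nhds L) ∧
      L = ((v ⬝ᵥ x0) / (v ⬝ᵥ v)) • v ∧
      (∀ p, 0 < L (Sum.inl p)) ∧
      (∀ p, L (Sum.inr (Sum.inl p)) = 0) ∧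
      (∀ p, L (Sum.inr (Sum.inr p)) < 0) := by
  have hv0 : v ≠ 0 := by
    rintro rfl
    simp at hx0
  have hvv : 0 < v ⬝ᵥ v := (Finset.sum_nonneg fun i _ => mul_self_nonneg (v i)).lt_of_ne
    fun h => hv0 (dotProduct_self_eq_zero.1 h.symm)
  have ha : 0 < (v ⬝ᵥ x0) / (v ⬝ᵥ v) := div_pos hx0 hvv
  refine ⟨_, hPSD.tendsto_exp_neg_smul_mulVec_of_ker_eq_span hker hv0 x0, rfl, ?_, ?_, ?_⟩ <;>
    intro p <;> subst hv
  · exact mul_pos ha (hv₁ p)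
  · exact mul_zero _
  · exact mul_neg_of_pos_of_neg ha (hv₃ p)

theorem stmt15 (n₁ n₂ n₃ : ℕ)
    (M : Matrix (Fin n₁ ⊕ Fin n₂ ⊕ Fin n₃) (Fin n₁ ⊕ Fin n₂ ⊕ Fin n₃) ℝ)
    (hM : M.IsSymm) (hPSD : M.PosSemidef)
    (v₁ : Fin n₁ → ℝ) (v₃ : Fin n₃ → ℝ)
    (hv₁ : ∀ i, 0 < v₁ i) (hv₃ : ∀ i, v₃ i < 0)
    (v : Fin n₁ ⊕ Fin n₂ ⊕ Fin n₃ → ℝ)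
    (hv : v = Sum.elim v₁ (Sum.elim (0 : Fin n₂ → ℝ) v₃))
    (hker : ∀ x, M *ᵥ x = 0 ↔ ∃ c : ℝ, x = c • v)
    (x0 : Fin n₁ ⊕ Fin n₂ ⊕ Fin n₃ → ℝ) (hx0 : 0 < v ⬝ᵥ x0) :
    ∃ L : Fin n₁ ⊕ Fin n₂ ⊕ Fin n₃ → ℝ,
      Tendsto (fun t : ℝ => (NormedSpace.exp (-(t • M))) *ᵥ x0) atTop (nhds L) ∧
      L = ((v ⬝ᵥ x0) / (v ⬝ᵥ v)) • v ∧
      (∀ p, 0 < L (Sum.inl p)) ∧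
      (∀ p, L (Sum.inr (Sum.inl p)) = 0) ∧
      (∀ p, L (Sum.inr (Sum.inr p)) < 0) :=
  stmt15_general n₁ n₂ n₃ M hPSD v₁ v₃ hv₁ hv₃ v hv hker x0 hx0
end
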